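/- arXiv:1311.3879 — 8 statements merged into one kernel-verified Lean document; each statement's English description precedes it below -/
import Mathlib

section
/- An RDF graph G RDF-entails a ground RDF graph P (every RDF model of G is a model of P) if and only if P ⊆ G, i.e., every triple of P is a triple of G. -/
/-- An RDF interpretation: resources, a set of properties, property extensions,
and an interpretation function for terms. -/
structure RDFInterp (T : Type) : Type 1 where
  R : Type
  P : Set R
  ext : R → Set (R × R)
  ι : T → R

/-- An interpretation is a model of a ground RDF graph when every triple is supported. -/
def RDFModel {T : Type} (I : RDFInterp T) (G : Set (T × T × T)) : Prop :=
  ∀ t ∈ G, I.ι t.2.1 ∈ I.P ∧ (I.ι t.1, I.ι t.2.2) ∈ I.ext (I.ι t.2.1)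

/-- An RDF graph G RDF-entails a ground RDF graph P iff P ⊆ G. -/
theorem rdf_entailment_ground_iff_subset {T : Type} (G P : Set (T × T × T)) :
    (∀ I : RDFInterp T, RDFModel I G → RDFModel I P) ↔ P ⊆ G := by
  constructor
  · intro h t htP
    let I : RDFInterp T :=
      { R := T
        P := {p | ∃ s o, (s, p, o) ∈ G}
        ext := fun p => {so | (so.1, p, so.2) ∈ G}
        ι := id }
    have hG : RDFModel I G := by
      intro u huG
      exact ⟨⟨u.1, u.2.2, huG⟩, huG⟩
    exact (h I hG t htP).2
  · intro hPG I hG t htP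
    exact hG t (hPG htP)
end

section
/- An RDF graph G RDF-entails a GRDF graph P (which may contain variables in any position) if and only if there exists a map σ from the terms of P to the terms of G, fixing names, such that for every triple (s,p,o) of P, the triple (σ(s), σ(p), σ(o)) belongs to G. -/
/-- An interpretation is a model of a (G)RDF graph (possibly with variables) when some
extension ι' of ι to the variables (fixing the names) supports every triple. -/
def RDFModelV {T : Type} (isName : T → Prop) (I : RDFInterp T)
    (G : Set (T × T × T)) : Prop :=
  ∃ ι' : T → I.R, (∀ x, isName x → ι' x = I.ι x) ∧
    ∀ t ∈ G, ι' t.2.1 ∈ I.P ∧ (ι' t.1, ι' t.2.2) ∈ I.ext (ι' t.2.1)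

/-- An RDF graph G RDF-entails a GRDF graph P iff there is a name-fixing map σ sending
every triple of P to a triple of G. -/
theorem grdf_entailment_iff_hom {T : Type} (isName : T → Prop)
    (G P : Set (T × T × T)) (hG : ∀ t ∈ G, isName t.2.1) :
    (∀ I : RDFInterp T, RDFModelV isName I G → RDFModelV isName I P) ↔
      ∃ σ : T → T, (∀ x, isName x → σ x = x) ∧
        ∀ t ∈ P, (σ t.1, σ t.2.1, σ t.2.2) ∈ G := by
  constructor
  · intro h
    -- canonical interpretation built from G
    let I : RDFInterp T := ⟨T, {p | ∃ s o, (s, p, o) ∈ G}, fun p => {so | (so.1, p, so.2) ∈ G}, id⟩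
    have hGmodel : RDFModelV isName I G := by
      refine ⟨id, fun x _ => rfl, fun t ht => ?_⟩
      exact ⟨⟨t.1, t.2.2, ht⟩, ht⟩
    obtain ⟨ι', hfix, hsupp⟩ := h I hGmodel
    exact ⟨ι', hfix, fun t ht => (hsupp t ht).2⟩
  · rintro ⟨σ, hfix, hhom⟩ I ⟨ι', hfix', hsupp⟩
    refine ⟨ι' ∘ σ, ?_, ?_⟩
    · intro x hx; simp [hfix x hx, hfix' x hx]
    · intro t ht
      exact hsupp (σ t.1, σ t.2.1, σ t.2.2) (hhom t ht)
end

section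
/- The partial RDFS closure of a finite RDF graph G is finite. -/
/-- One step of the RDFS closure rules. -/
def rdfsStep {T : Type} (sp sc typ dom rng : T) (S : Set (T × T × T)) :
    Set (T × T × T) :=
  S ∪ {t | ∃ p q r, (p, sp, q) ∈ S ∧ (q, sp, r) ∈ S ∧ t = (p, sp, r)}
    ∪ {t | ∃ a b c, (a, sc, b) ∈ S ∧ (b, sc, c) ∈ S ∧ t = (a, sc, c)}
    ∪ {t | ∃ p q x y, (p, sp, q) ∈ S ∧ (x, p, y) ∈ S ∧ t = (x, q, y)}
    ∪ {t | ∃ a b x, (a, sc, b) ∈ S ∧ (x, typ, a) ∈ S ∧ t = (x, typ, b)}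
    ∪ {t | ∃ p a x y, (p, dom, a) ∈ S ∧ (x, p, y) ∈ S ∧ t = (x, typ, a)}
    ∪ {t | ∃ p a x y, (p, rng, a) ∈ S ∧ (x, p, y) ∈ S ∧ t = (y, typ, a)}

/-- The partial RDFS closure of a finite RDF graph G is finite: starting from a
finite graph G together with the finitely many (bounded) axiomatic triples A,
iterating the finitary RDFS closure rules yields a finite set. -/
theorem partial_rdfs_closure_finite {T : Type} (sp sc typ dom rng : T)
    (G A : Set (T × T × T)) (hG : G.Finite) (hA : A.Finite) :
    (⋃ n, (rdfsStep sp sc typ dom rng)^[n] (G ∪ A)).Finite := by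
  set B : Set (T × T × T) := G ∪ A with hB
  have hBfin : B.Finite := hG.union hA
  -- vocabulary
  set V : Set T := insert sp (insert sc (insert typ (insert dom (insert rng
    ((fun t : T × T × T => t.1) '' B ∪ (fun t : T × T × T => t.2.1) '' B ∪
      (fun t : T × T × T => t.2.2) '' B))))) with hV
  have hVfin : V.Finite := by
    apply Set.Finite.insert; apply Set.Finite.insert; apply Set.Finite.insert
    apply Set.Finite.insert; apply Set.Finite.insert
    exact ((hBfin.image _).union (hBfin.image _)).union (hBfin.image _)
  have hspV : sp ∈ V := by simp [hV]
  have hscV : sc ∈ V := by simp [hV]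
  have htypV : typ ∈ V := by simp [hV]
  set W : Set (T × T × T) := V ×ˢ V ×ˢ V with hW
  have hWfin : W.Finite := hVfin.prod (hVfin.prod hVfin)
  have hBW : B ⊆ W := by
    intro t ht
    refine ⟨?_, ?_, ?_⟩
    · simp only [hV]; right; right; right; right; right
      left; left; exact ⟨t, ht, rfl⟩
    · simp only [hV]; right; right; right; right; right
      left; right; exact ⟨t, ht, rfl⟩
    · simp only [hV]; right; right; right; right; right
      right; exact ⟨t, ht, rfl⟩
  have hstep : ∀ S : Set (T × T × T), S ⊆ W → rdfsStep sp sc typ dom rng S ⊆ W := by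
    intro S hS t ht
    rcases ht with ((((((ht | ht) | ht) | ht) | ht) | ht) | ht)
    · exact hS ht
    · obtain ⟨p, q, r, h1, h2, rfl⟩ := ht
      exact ⟨(hS h1).1, hspV, (hS h2).2.2⟩
    · obtain ⟨a, b, c, h1, h2, rfl⟩ := ht
      exact ⟨(hS h1).1, hscV, (hS h2).2.2⟩
    · obtain ⟨p, q, x, y, h1, h2, rfl⟩ := ht
      exact ⟨(hS h2).1, (hS h1).2.2, (hS h2).2.2⟩
    · obtain ⟨a, b, x, h1, h2, rfl⟩ := ht
      exact ⟨(hS h2).1, htypV, (hS h1).2.2⟩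
    · obtain ⟨p, a, x, y, h1, h2, rfl⟩ := ht
      exact ⟨(hS h2).1, htypV, (hS h1).2.2⟩
    · obtain ⟨p, a, x, y, h1, h2, rfl⟩ := ht
      exact ⟨(hS h2).2.2, htypV, (hS h1).2.2⟩
  have hiter : ∀ n, (rdfsStep sp sc typ dom rng)^[n] B ⊆ W := by
    intro n
    induction n with
    | zero => simpa using hBW
    | succ n ih =>
      rw [Function.iterate_succ_apply']
      exact hstep _ ih
  exact Set.Finite.subset hWfin (Set.iUnion_subset hiter)
end

section
/- Every nested regular expression R can be translated into a constrained regular expression trans(R) such that for every RDF graph G, [[R]]_G = [[trans(R)]]_G. -/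
/-- The navigation axes (and their inverses). -/
inductive Axis : Type where
  | self | next | edge | node | selfInv | nextInv | edgeInv | nodeInv

/-- Three-component interpretation of an axis over an RDF graph
(the third component is the auxiliary term used by the step). -/
def axInterp {U : Type} (G : Set (U × U × U)) : Axis → Set (U × U × U)
  | .self => {t | t.2.1 = t.1 ∧ t.2.2 = t.1}
  | .next => {t | (t.1, t.2.2, t.2.1) ∈ G}
  | .edge => {t | t.2.2 = t.2.1 ∧ ∃ y, (t.1, t.2.1, y) ∈ G}
  | .node => {t | t.2.2 = t.1 ∧ ∃ x, (x, t.1, t.2.1) ∈ G}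
  | .selfInv => {t | t.2.1 = t.1 ∧ t.2.2 = t.1}
  | .nextInv => {t | (t.2.1, t.2.2, t.1) ∈ G}
  | .edgeInv => {t | t.2.2 = t.1 ∧ ∃ y, (t.2.1, t.1, y) ∈ G}
  | .nodeInv => {t | t.2.2 = t.2.1 ∧ ∃ x, (x, t.2.1, t.1) ∈ G}

/-- Nested regular expressions: axes, axis::a, nesting axis::[nre],
concatenation, union and star. -/
inductive NRE (U : Type) : Type where
  | ax : Axis → NRE U
  | axA : Axis → U → NRE U
  | nest : Axis → NRE U → NRE U
  | seq : NRE U → NRE U → NRE U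
  | alt : NRE U → NRE U → NRE U
  | star : NRE U → NRE U

/-- Constrained regular expressions: axes, axis::a, constraints
axis::[?x : {⟨?x, cre, p⟩}] (constant object) and axis::[?x : {⟨?x, cre, ?y⟩}]
(variable object), concatenation, union and star. -/
inductive CRE (U : Type) : Type where
  | ax : Axis → CRE U
  | axA : Axis → U → CRE U
  | constrC : Axis → CRE U → U → CRE U
  | constrV : Axis → CRE U → CRE U
  | seq : CRE U → CRE U → CRE U
  | alt : CRE U → CRE U → CRE U
  | star : CRE U → CRE U

def comp3 {U : Type} (A B : Set (U × U × U)) : Set (U × U × U) :=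
  {t | ∃ w k, (t.1, w, k) ∈ A ∧ (w, t.2.1, t.2.2) ∈ B}

def idT (U : Type) : Set (U × U × U) := {t | t.2.1 = t.1 ∧ t.2.2 = t.1}

def pow3 {U : Type} (A : Set (U × U × U)) : ℕ → Set (U × U × U)
  | 0 => idT U
  | 1 => A
  | n + 2 => comp3 A (pow3 A (n + 1))

/-- Three-component interpretation of a nested regular expression over an RDF graph. -/
def interpN {U : Type} (G : Set (U × U × U)) : NRE U → Set (U × U × U)
  | .ax a => axInterp G a
  | .axA a u => {t | t ∈ axInterp G a ∧ t.2.2 = u}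
  | .nest a r => {t | t ∈ axInterp G a ∧ ∃ w k, (t.2.2, w, k) ∈ interpN G r}
  | .seq r1 r2 => comp3 (interpN G r1) (interpN G r2)
  | .alt r1 r2 => interpN G r1 ∪ interpN G r2
  | .star r => ⋃ n, pow3 (interpN G r) n

/-- Pair-projection. -/
def pairProj {U : Type} (S : Set (U × U × U)) : Set (U × U) :=
  {p | ∃ z, (p.1, p.2, z) ∈ S}

def comp2 {U : Type} (R1 R2 : Set (U × U)) : Set (U × U) :=
  {p | ∃ w, (p.1, w) ∈ R1 ∧ (w, p.2) ∈ R2}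

def idP (U : Type) : Set (U × U) := {p | p.2 = p.1}

def pow2 {U : Type} (R : Set (U × U)) : ℕ → Set (U × U)
  | 0 => idP U
  | n + 1 => comp2 R (pow2 R n)

/-- Pair interpretation of a constrained regular expression over an RDF graph:
constraints require the existence of witnesses satisfying them in G. -/
def interpC {U : Type} (G : Set (U × U × U)) : CRE U → Set (U × U)
  | .ax a => pairProj (axInterp G a)
  | .axA a u => {p | (p.1, p.2, u) ∈ axInterp G a}
  | .constrC a r v => {p | ∃ z, (p.1, p.2, z) ∈ axInterp G a ∧ (z, v) ∈ interpC G r}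
  | .constrV a r => {p | ∃ z, (p.1, p.2, z) ∈ axInterp G a ∧ ∃ w, (z, w) ∈ interpC G r}
  | .seq r1 r2 => comp2 (interpC G r1) (interpC G r2)
  | .alt r1 r2 => interpC G r1 ∪ interpC G r2
  | .star r => ⋃ n, pow2 (interpC G r) n

/-- The structural translation of nested regular expressions into constrained
regular expressions: identity on axes and axis::a, commuting with /, | and *,
and mapping exp1::[exp2] to exp1::[?x : {⟨?x, trans(exp3), p⟩}] if
exp2 = exp3/self::p, and to exp1::[?x : {⟨?x, trans(exp2), ?y⟩}] otherwise. -/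
def nre2cre {U : Type} : NRE U → CRE U
  | .ax a => .ax a
  | .axA a u => .axA a u
  | .seq r1 r2 => .seq (nre2cre r1) (nre2cre r2)
  | .alt r1 r2 => .alt (nre2cre r1) (nre2cre r2)
  | .star r => .star (nre2cre r)
  | .nest a (.seq r3 (.axA .self p)) => .constrC a (nre2cre r3) p
  | .nest a r => .constrV a (nre2cre r)

lemma pairProj_comp3 {U : Type} (A B : Set (U × U × U)) :
    pairProj (comp3 A B) = comp2 (pairProj A) (pairProj B) := by
  ext ⟨x, y⟩
  simp only [pairProj, comp3, comp2, Set.mem_setOf_eq]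
  constructor
  · rintro ⟨z, w, k, hA, hB⟩; exact ⟨w, ⟨k, hA⟩, ⟨z, hB⟩⟩
  · rintro ⟨w, ⟨k, hA⟩, ⟨z, hB⟩⟩; exact ⟨z, w, k, hA, hB⟩

lemma pairProj_idT {U : Type} : pairProj (idT U) = idP U := by
  ext ⟨x, y⟩
  simp only [pairProj, idT, idP, Set.mem_setOf_eq]
  constructor
  · rintro ⟨z, h1, h2⟩; exact h1
  · rintro h; exact ⟨x, h, rfl⟩

lemma comp2_idP {U : Type} (R : Set (U × U)) : comp2 R (idP U) = R := by
  ext ⟨x, y⟩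
  simp only [comp2, idP, Set.mem_setOf_eq]
  constructor
  · rintro ⟨w, h1, h2⟩; cases h2; exact h1
  · intro h; exact ⟨y, h, rfl⟩

lemma pairProj_pow3 {U : Type} (A : Set (U × U × U)) (n : ℕ) :
    pairProj (pow3 A n) = pow2 (pairProj A) n := by
  induction n using Nat.strong_induction_on with
  | _ n ih =>
    match n with
    | 0 => exact pairProj_idT
    | 1 => simp [pow3, pow2, comp2_idP]
    | n + 2 =>
      show pairProj (comp3 A (pow3 A (n+1))) = comp2 (pairProj A) (pow2 (pairProj A) (n+1))
      rw [pairProj_comp3, ih (n+1) (by omega)]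

lemma nre2cre_nest {U : Type} (G : Set (U × U × U)) (a : Axis) (r : NRE U) :
    interpC G (nre2cre (NRE.nest a r)) =
      {p : U × U | ∃ z, (p.1, p.2, z) ∈ axInterp G a ∧
        ∃ w, (z, w) ∈ interpC G (nre2cre r)} := by
  match r with
  | .ax _ => rfl
  | .axA _ _ => rfl
  | .nest _ _ => rfl
  | .alt _ _ => rfl
  | .star _ => rfl
  | .seq r3 r4 =>
    match r4 with
    | .ax _ => rfl
    | .nest _ _ => rfl
    | .seq _ _ => rfl
    | .alt _ _ => rfl
    | .star _ => rfl
    | .axA ax p =>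
      match ax with
      | .next => rfl
      | .edge => rfl
      | .node => rfl
      | .selfInv => rfl
      | .nextInv => rfl
      | .edgeInv => rfl
      | .nodeInv => rfl
      | .self =>
        show interpC G (.constrC a (nre2cre r3) p) = _
        ext ⟨x, y⟩
        simp only [interpC, comp2, axInterp, Set.mem_setOf_eq]
        constructor
        · rintro ⟨z, hz, hr⟩
          exact ⟨z, hz, p, p, hr, rfl, rfl⟩
        · rintro ⟨z, hz, w, w', hr, h1, h2⟩
          cases h1; cases h2; exact ⟨z, hz, hr⟩

/-- Every nested regular expression R can be translated into a constrained
regular expression trans(R) with the same evaluation over every RDF graph. -/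
theorem trans_correct {U : Type} (G : Set (U × U × U)) (R : NRE U) :
    pairProj (interpN G R) = interpC G (nre2cre R) := by
  induction R with
  | ax a => rfl
  | axA a u =>
    ext ⟨x, y⟩
    simp only [pairProj, interpN, interpC, nre2cre, Set.mem_setOf_eq]
    constructor
    · rintro ⟨z, h, rfl⟩; exact h
    · intro h; exact ⟨u, h, rfl⟩
  | nest a r ih =>
    rw [nre2cre_nest, ← ih]
    ext ⟨x, y⟩
    simp only [pairProj, interpN, Set.mem_setOf_eq]
  | seq r1 r2 ih1 ih2 =>
    show pairProj (comp3 _ _) = _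
    rw [pairProj_comp3, ih1, ih2]; rfl
  | alt r1 r2 ih1 ih2 =>
    show pairProj (interpN G r1 ∪ interpN G r2) = _
    have : pairProj (interpN G r1 ∪ interpN G r2)
        = pairProj (interpN G r1) ∪ pairProj (interpN G r2) := by
      ext ⟨x, y⟩
      simp only [pairProj, Set.mem_union, Set.mem_setOf_eq]
      constructor
      · rintro ⟨z, h | h⟩; exacts [Or.inl ⟨z, h⟩, Or.inr ⟨z, h⟩]
      · rintro (⟨z, h⟩ | ⟨z, h⟩); exacts [⟨z, Or.inl h⟩, ⟨z, Or.inr h⟩]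
    rw [this, ih1, ih2]; rfl
  | star r ih =>
    show pairProj (⋃ n, pow3 (interpN G r) n) = ⋃ n, pow2 (interpC G (nre2cre r)) n
    have : pairProj (⋃ n, pow3 (interpN G r) n)
        = ⋃ n, pairProj (pow3 (interpN G r) n) := by
      ext ⟨x, y⟩
      simp only [pairProj, Set.mem_iUnion, Set.mem_setOf_eq]
      exact ⟨fun ⟨z, n, h⟩ => ⟨n, z, h⟩, fun ⟨n, z, h⟩ => ⟨z, n, h⟩⟩
    rw [this, ← ih]
    exact Set.iUnion_congr fun n => pairProj_pow3 _ n
end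

section
/- Let G be a satisfiable genuine RDFS graph and H an RDFS graph. Then G entails H under the non-reflexive RDFS semantics if and only if the partial non-reflexive RDFS closure of G (given H) RDF-entails H. -/
/-- The ρdf vocabulary. -/
def rhoDF {T : Type} (sp sc typ dom rng : T) : Set T := {sp, sc, typ, dom, rng}

/-- An RDFS interpretation (for the ρdf fragment): resources, property extensions,
class extensions, and an interpretation function. -/
structure RdfsInterp (T : Type) : Type 1 where
  R : Type
  ext : R → Set (R × R)
  cext : R → Set R
  ι : T → R

/-- The semantic conditions of the non-reflexive RDFS semantics: subproperty and
subclass extensions are transitive (but not required reflexive), subproperties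
inherit extensions, subclasses propagate class membership, typing is class
membership, and domain/range constrain extensions. -/
def RdfsCond {T : Type} (sp sc typ dom rng : T) (I : RdfsInterp T) : Prop :=
  (∀ x y z, (x, y) ∈ I.ext (I.ι sp) → (y, z) ∈ I.ext (I.ι sp) → (x, z) ∈ I.ext (I.ι sp)) ∧
  (∀ x y, (x, y) ∈ I.ext (I.ι sp) → ∀ a b, (a, b) ∈ I.ext x → (a, b) ∈ I.ext y) ∧
  (∀ x y z, (x, y) ∈ I.ext (I.ι sc) → (y, z) ∈ I.ext (I.ι sc) → (x, z) ∈ I.ext (I.ι sc)) ∧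
  (∀ x y, (x, y) ∈ I.ext (I.ι sc) → I.cext x ⊆ I.cext y) ∧
  (∀ x y, (x, y) ∈ I.ext (I.ι typ) ↔ x ∈ I.cext y) ∧
  (∀ p c, (p, c) ∈ I.ext (I.ι dom) → ∀ a b, (a, b) ∈ I.ext p → a ∈ I.cext c) ∧
  (∀ p c, (p, c) ∈ I.ext (I.ι rng) → ∀ a b, (a, b) ∈ I.ext p → b ∈ I.cext c)

/-- The triples of a graph are supported by an interpretation via some name-fixing
extension ι' of the interpretation function to the variables. -/
def SupportsGraph {T : Type} (isName : T → Prop) (I : RdfsInterp T)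
    (G : Set (T × T × T)) : Prop :=
  ∃ ι' : T → I.R, (∀ x, isName x → ι' x = I.ι x) ∧
    ∀ t ∈ G, (ι' t.1, ι' t.2.2) ∈ I.ext (ι' t.2.1)

/-- An RDFS model (non-reflexive semantics). -/
def RdfsModels {T : Type} (isName : T → Prop) (sp sc typ dom rng : T)
    (I : RdfsInterp T) (G : Set (T × T × T)) : Prop :=
  RdfsCond sp sc typ dom rng I ∧ SupportsGraph isName I G

section Aux
variable {T : Type} (sp sc typ dom rng : T)

lemma subset_rdfsStep (S : Set (T × T × T)) : S ⊆ rdfsStep sp sc typ dom rng S :=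
  fun _ ht => Or.inl (Or.inl (Or.inl (Or.inl (Or.inl (Or.inl ht)))))

lemma iter_mono (G : Set (T × T × T)) :
    Monotone (fun n => (rdfsStep sp sc typ dom rng)^[n] G) := by
  apply monotone_nat_of_le_succ
  intro n
  rw [Function.iterate_succ_apply']
  exact subset_rdfsStep sp sc typ dom rng _

lemma cl_rule (G : Set (T × T × T)) {t1 t2 c : T × T × T}
    (h : ∀ S : Set (T × T × T), t1 ∈ S → t2 ∈ S → c ∈ rdfsStep sp sc typ dom rng S)
    (h1 : t1 ∈ ⋃ n, (rdfsStep sp sc typ dom rng)^[n] G)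
    (h2 : t2 ∈ ⋃ n, (rdfsStep sp sc typ dom rng)^[n] G) :
    c ∈ ⋃ n, (rdfsStep sp sc typ dom rng)^[n] G := by
  obtain ⟨_, ⟨n1, rfl⟩, h1⟩ := h1
  obtain ⟨_, ⟨n2, rfl⟩, h2⟩ := h2
  refine Set.mem_iUnion.2 ⟨max n1 n2 + 1, ?_⟩
  rw [Function.iterate_succ_apply']
  exact h _ (iter_mono sp sc typ dom rng G (le_max_left n1 n2) h1)
    (iter_mono sp sc typ dom rng G (le_max_right n1 n2) h2)

end Aux

/-- Completeness of the partial non-reflexive RDFS closure: for a satisfiable genuine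
RDFS graph G and an RDFS graph H, G entails H under the non-reflexive RDFS semantics
iff the partial non-reflexive RDFS closure of G RDF-entails H (i.e. there is a
name-fixing homomorphism from H into the closure). -/
theorem partial_nrx_closure_complete {T : Type} (isName : T → Prop)
    (sp sc typ dom rng : T)
    (hn : isName sp ∧ isName sc ∧ isName typ ∧ isName dom ∧ isName rng)
    (G H : Set (T × T × T))
    (hGenuine : ∀ t ∈ G, t.1 ∉ rhoDF sp sc typ dom rng ∧ t.2.2 ∉ rhoDF sp sc typ dom rng)
    (hSat : ∃ I : RdfsInterp T, RdfsModels isName sp sc typ dom rng I G) :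
    (∀ I : RdfsInterp T, RdfsModels isName sp sc typ dom rng I G →
        RdfsModels isName sp sc typ dom rng I H) ↔
      ∃ σ : T → T, (∀ x, isName x → σ x = x) ∧
        ∀ t ∈ H, (σ t.1, σ t.2.1, σ t.2.2) ∈ ⋃ n, (rdfsStep sp sc typ dom rng)^[n] G := by
  obtain ⟨hsp, hsc, htyp, hdom, hrng⟩ := hn
  constructor
  · intro hEnt
    set Cl := ⋃ n, (rdfsStep sp sc typ dom rng)^[n] G with hCldef
    have hGsub : ∀ t ∈ G, t ∈ Cl := fun t ht => Set.mem_iUnion.2 ⟨0, ht⟩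
    set I : RdfsInterp T :=
      { R := T
        ext := fun p => {ab | (ab.1, p, ab.2) ∈ Cl}
        cext := fun c => {a | (a, typ, c) ∈ Cl}
        ι := id } with hIdef
    have hIG : RdfsModels isName sp sc typ dom rng I G := by
      refine ⟨⟨?_, ?_, ?_, ?_, ?_, ?_, ?_⟩, id, fun x _ => rfl, fun t ht => hGsub t ht⟩
      · intro x y z h1 h2
        exact cl_rule sp sc typ dom rng G (t1 := (x, sp, y)) (t2 := (y, sp, z))
          (c := (x, sp, z))
          (fun S m1 m2 =>
            Or.inl (Or.inl (Or.inl (Or.inl (Or.inl (Or.inr ⟨x, y, z, m1, m2, rfl⟩))))))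
          h1 h2
      · intro x y h1 a b h2
        exact cl_rule sp sc typ dom rng G (t1 := (x, sp, y)) (t2 := (a, x, b))
          (c := (a, y, b))
          (fun S m1 m2 =>
            Or.inl (Or.inl (Or.inl (Or.inr ⟨x, y, a, b, m1, m2, rfl⟩))))
          h1 h2
      · intro x y z h1 h2
        exact cl_rule sp sc typ dom rng G (t1 := (x, sc, y)) (t2 := (y, sc, z))
          (c := (x, sc, z))
          (fun S m1 m2 =>
            Or.inl (Or.inl (Or.inl (Or.inl (Or.inr ⟨x, y, z, m1, m2, rfl⟩)))))
          h1 h2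
      · intro x y h1 a h2
        exact cl_rule sp sc typ dom rng G (t1 := (x, sc, y)) (t2 := (a, typ, x))
          (c := (a, typ, y))
          (fun S m1 m2 => Or.inl (Or.inl (Or.inr ⟨x, y, a, m1, m2, rfl⟩)))
          h1 h2
      · intro x y
        exact Iff.rfl
      · intro p c h1 a b h2
        exact cl_rule sp sc typ dom rng G (t1 := (p, dom, c)) (t2 := (a, p, b))
          (c := (a, typ, c))
          (fun S m1 m2 => Or.inl (Or.inr ⟨p, c, a, b, m1, m2, rfl⟩))
          h1 h2
      · intro p c h1 a b h2
        exact cl_rule sp sc typ dom rng G (t1 := (p, rng, c)) (t2 := (a, p, b))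
          (c := (b, typ, c))
          (fun S m1 m2 => Or.inr ⟨p, c, a, b, m1, m2, rfl⟩)
          h1 h2
    obtain ⟨_, ι', hfix, hH⟩ := hEnt I hIG
    exact ⟨ι', fun x hx => hfix x hx, fun t ht => hH t ht⟩
  · rintro ⟨σ, hσ, hσH⟩ I ⟨hc, ι', hfix, hG⟩
    refine ⟨hc, ?_⟩
    obtain ⟨c1, c2, c3, c4, c5, c6, c7⟩ := hc
    have esp := hfix sp hsp
    have esc := hfix sc hsc
    have etyp := hfix typ htyp
    have edom := hfix dom hdom
    have erng := hfix rng hrng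
    have sound : ∀ n, ∀ t ∈ (rdfsStep sp sc typ dom rng)^[n] G,
        (ι' t.1, ι' t.2.2) ∈ I.ext (ι' t.2.1) := by
      intro n
      induction n with
      | zero => exact hG
      | succ n ih =>
        rw [Function.iterate_succ_apply']
        rintro t ((((((ht | ⟨p, q, r, h1, h2, rfl⟩) | ⟨a, b, c, h1, h2, rfl⟩) |
          ⟨p, q, x, y, h1, h2, rfl⟩) | ⟨a, b, x, h1, h2, rfl⟩) |
          ⟨p, a, x, y, h1, h2, rfl⟩) | ⟨p, a, x, y, h1, h2, rfl⟩)
        · exact ih t ht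
        · have H1 : (ι' p, ι' q) ∈ I.ext (ι' sp) := ih _ h1
          have H2 : (ι' q, ι' r) ∈ I.ext (ι' sp) := ih _ h2
          show (ι' p, ι' r) ∈ I.ext (ι' sp)
          rw [esp] at H1 H2 ⊢
          exact c1 _ _ _ H1 H2
        · have H1 : (ι' a, ι' b) ∈ I.ext (ι' sc) := ih _ h1
          have H2 : (ι' b, ι' c) ∈ I.ext (ι' sc) := ih _ h2
          show (ι' a, ι' c) ∈ I.ext (ι' sc)
          rw [esc] at H1 H2 ⊢
          exact c3 _ _ _ H1 H2
        · have H1 : (ι' p, ι' q) ∈ I.ext (ι' sp) := ih _ h1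
          have H2 : (ι' x, ι' y) ∈ I.ext (ι' p) := ih _ h2
          show (ι' x, ι' y) ∈ I.ext (ι' q)
          rw [esp] at H1
          exact c2 _ _ H1 _ _ H2
        · have H1 : (ι' a, ι' b) ∈ I.ext (ι' sc) := ih _ h1
          have H2 : (ι' x, ι' a) ∈ I.ext (ι' typ) := ih _ h2
          show (ι' x, ι' b) ∈ I.ext (ι' typ)
          rw [esc] at H1
          rw [etyp] at H2 ⊢
          exact (c5 _ _).2 (c4 _ _ H1 ((c5 _ _).1 H2))
        · have H1 : (ι' p, ι' a) ∈ I.ext (ι' dom) := ih _ h1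
          have H2 : (ι' x, ι' y) ∈ I.ext (ι' p) := ih _ h2
          show (ι' x, ι' a) ∈ I.ext (ι' typ)
          rw [edom] at H1
          rw [etyp]
          exact (c5 _ _).2 (c6 _ _ H1 _ _ H2)
        · have H1 : (ι' p, ι' a) ∈ I.ext (ι' rng) := ih _ h1
          have H2 : (ι' x, ι' y) ∈ I.ext (ι' p) := ih _ h2
          show (ι' y, ι' a) ∈ I.ext (ι' typ)
          rw [erng] at H1
          rw [etyp]
          exact (c5 _ _).2 (c7 _ _ H1 _ _ H2)
    refine ⟨fun x => ι' (σ x), fun x hx => by show ι' (σ x) = I.ι x; rw [hσ x hx]; exact hfix x hx, ?_⟩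
    intro t ht
    obtain ⟨_, ⟨n, rfl⟩, hmem⟩ := hσH t ht
    exact sound n (σ t.1, σ t.2.1, σ t.2.2) hmem
end

section
/- Let t = ⟨X, p, Y⟩ with p a URI not in {sc, sp, type, dom, range}. A map σ satisfies (σ(X), p, σ(Y)) ∈ closure of G under the sp-rules if and only if there exists a property p₀ and a (possibly empty) chain p₀ sp p₁ sp ... sp p (of sp-triples in G) with (σ(X), p₀, σ(Y)) ∈ G. -/
/-- One step of the sp-rules: sp-transitivity and inheritance of triples along sp. -/
def spStep {T : Type} (sp : T) (S : Set (T × T × T)) : Set (T × T × T) :=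
  S ∪ {t | ∃ p q r, (p, sp, q) ∈ S ∧ (q, sp, r) ∈ S ∧ t = (p, sp, r)}
    ∪ {t | ∃ p q x y, (p, sp, q) ∈ S ∧ (x, p, y) ∈ S ∧ t = (x, q, y)}

/-- Correctness of the PSPARQL rewriting τ(⟨X,p,Y⟩) = {⟨X,?x,Y⟩, ⟨?x, sp*, p⟩}:
for a genuine graph G and p a URI not in {sc, sp, type, dom, range},
(σ(X), p, σ(Y)) is in the closure of G under the sp-rules iff there is a property
p₀ and a (possibly empty) chain of sp-triples of G from p₀ to p with
(σ(X), p₀, σ(Y)) ∈ G. -/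
theorem sp_closure_iff_sp_chain {T V : Type} (sp sc typ dom rng : T)
    (G : Set (T × T × T))
    (hGenuine : ∀ t ∈ G, t.1 ∉ ({sp, sc, typ, dom, rng} : Set T) ∧
      t.2.2 ∉ ({sp, sc, typ, dom, rng} : Set T))
    (σ : V → T) (X Y : V) (p : T) (hp : p ∉ ({sp, sc, typ, dom, rng} : Set T)) :
    (σ X, p, σ Y) ∈ (⋃ n, (spStep sp)^[n] G) ↔
      ∃ p0 : T, Relation.ReflTransGen (fun a b => (a, sp, b) ∈ G) p0 p ∧
        (σ X, p0, σ Y) ∈ G := by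
  classical
  set R : T → T → Prop := fun a b => (a, sp, b) ∈ G with hR
  have hsp : sp ∈ ({sp, sc, typ, dom, rng} : Set T) := by left; rfl
  have hnsubj : ∀ b, ¬ R sp b := fun b h => (hGenuine _ h).1 hsp
  have hnobj : ∀ a, ¬ R a sp := fun a h => (hGenuine _ h).2 hsp
  set C : Set (T × T × T) :=
    {t | (∃ p0, Relation.ReflTransGen R p0 t.2.1 ∧ (t.1, p0, t.2.2) ∈ G) ∨
      (t.2.1 = sp ∧ Relation.TransGen R t.1 t.2.2)} with hC
  have hGC : G ⊆ C := by
    intro t ht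
    exact Or.inl ⟨t.2.1, Relation.ReflTransGen.refl, by simpa using ht⟩
  have hE : ∀ a b : T, (a, sp, b) ∈ C → Relation.TransGen R a b := by
    rintro a b (⟨p0, hrtg, hG⟩ | ⟨_, htg⟩)
    · rcases hrtg.cases_tail with h | ⟨c, _, hcb⟩
      · subst h; exact Relation.TransGen.single hG
      · exact absurd hcb (hnobj c)
    · exact htg
  have hstep : ∀ S : Set (T × T × T), S ⊆ C → spStep sp S ⊆ C := by
    intro S hS t ht
    rcases ht with (ht | ⟨a, b, c, h1, h2, rfl⟩) | ⟨a, b, x, y, h1, h2, rfl⟩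
    · exact hS ht
    · exact Or.inr ⟨rfl, (hE a b (hS h1)).trans (hE b c (hS h2))⟩
    · have hab : Relation.TransGen R a b := hE a b (hS h1)
      rcases hS h2 with ⟨p0, hrtg, hG⟩ | ⟨hsp', htg⟩
      · exact Or.inl ⟨p0, hrtg.trans hab.to_reflTransGen, hG⟩
      · simp only at hsp'
        subst hsp'
        rcases Relation.TransGen.head'_iff.mp hab with ⟨c, hc, _⟩
        exact absurd hc (hnsubj c)
  have hiter : ∀ n, (spStep sp)^[n] G ⊆ C := by
    intro n
    induction n with
    | zero => simpa using hGC
    | succ n ih =>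
      rw [Function.iterate_succ_apply']
      exact hstep _ ih
  have hmono : ∀ n, (spStep sp)^[n] G ⊆ (spStep sp)^[n + 1] G := by
    intro n
    rw [Function.iterate_succ_apply']
    intro t ht
    exact Or.inl (Or.inl ht)
  have hGmem : ∀ n, G ⊆ (spStep sp)^[n] G := by
    intro n
    induction n with
    | zero => simp
    | succ m ihm => exact fun t ht => hmono m (ihm ht)
  constructor
  · intro h
    rcases Set.mem_iUnion.mp h with ⟨n, hn⟩
    rcases hiter n hn with ⟨p0, hrtg, hG⟩ | ⟨hps, _⟩
    · exact ⟨p0, hrtg, hG⟩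
    · simp only at hps
      exact absurd (hps ▸ hp) (fun h' => h' hsp)
  · rintro ⟨p0, hchain, hG⟩
    have : ∀ q : T, Relation.ReflTransGen R p0 q →
        ∃ n, (σ X, q, σ Y) ∈ (spStep sp)^[n] G := by
      intro q hq
      induction hq with
      | refl => exact ⟨0, by simpa using hG⟩
      | @tail b c hbc hedge ih =>
        rcases ih with ⟨n, hn⟩
        refine ⟨n + 1, ?_⟩
        rw [Function.iterate_succ_apply']
        exact Or.inr ⟨b, c, σ X, σ Y, hGmem n hedge, hn, rfl⟩
    rcases this p hchain with ⟨n, hn⟩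
    exact Set.mem_iUnion.mpr ⟨n, hn⟩
end

section
/- Let t = ⟨X, type, Y⟩. In the closure of a genuine RDFS graph G under the RDFS rules, (σ(X), type, σ(Y)) holds if and only if at least one of the following holds in G: (1) there is a chain (σ(X), type, c₀), (c₀, sc, c₁), ..., (c_{n-1}, sc, σ(Y)) with n ≥ 0; (2) there exist a property chain p₀ sp ... sp p_n, a triple (σ(X), p₀, y) ∈ G, a triple (p_n, dom, c₀) ∈ G and an sc-chain from c₀ to σ(Y); (3) symmetrically with (y, p₀, σ(X)) and range instead of dom. -/
namespace RDFSAux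

open Relation

variable {T : Type}

/-- Characterization predicate for type triples. -/
def TY (sp sc typ dom rng : T) (G : Set (T × T × T)) (x b : T) : Prop :=
  (∃ c0, (x, typ, c0) ∈ G ∧ ReflTransGen (fun a b => (a, sc, b) ∈ G) c0 b) ∨
  (∃ p0 pn y c0, ReflTransGen (fun a b => (a, sp, b) ∈ G) p0 pn ∧
      (x, p0, y) ∈ G ∧ (pn, dom, c0) ∈ G ∧
      ReflTransGen (fun a b => (a, sc, b) ∈ G) c0 b) ∨
  (∃ p0 pn y c0, ReflTransGen (fun a b => (a, sp, b) ∈ G) p0 pn ∧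
      (y, p0, x) ∈ G ∧ (pn, rng, c0) ∈ G ∧
      ReflTransGen (fun a b => (a, sc, b) ∈ G) c0 b)

/-- Explicit description of the RDFS closure of a genuine graph. -/
def C (sp sc typ dom rng : T) (G : Set (T × T × T)) : Set (T × T × T) :=
  {t | (∃ p r, TransGen (fun a b => (a, sp, b) ∈ G) p r ∧ t = (p, sp, r)) ∨
       (∃ a c, TransGen (fun a b => (a, sc, b) ∈ G) a c ∧ t = (a, sc, c)) ∨
       (∃ p q x y, ReflTransGen (fun a b => (a, sp, b) ∈ G) p q ∧
           (x, p, y) ∈ G ∧ t = (x, q, y)) ∨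
       (∃ x b, TY sp sc typ dom rng G x b ∧ t = (x, typ, b))}

def Genuine (sp sc typ dom rng : T) (G : Set (T × T × T)) : Prop :=
  ∀ t ∈ G, t.1 ∉ ({sp, sc, typ, dom, rng} : Set T) ∧
    t.2.2 ∉ ({sp, sc, typ, dom, rng} : Set T)

variable {sp sc typ dom rng : T} {G : Set (T × T × T)}

lemma mem_rdfsStep {S : Set (T × T × T)} {t : T × T × T} :
    t ∈ rdfsStep sp sc typ dom rng S ↔
      t ∈ S ∨
      (∃ p q r, (p, sp, q) ∈ S ∧ (q, sp, r) ∈ S ∧ t = (p, sp, r)) ∨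
      (∃ a b c, (a, sc, b) ∈ S ∧ (b, sc, c) ∈ S ∧ t = (a, sc, c)) ∨
      (∃ p q x y, (p, sp, q) ∈ S ∧ (x, p, y) ∈ S ∧ t = (x, q, y)) ∨
      (∃ a b x, (a, sc, b) ∈ S ∧ (x, typ, a) ∈ S ∧ t = (x, typ, b)) ∨
      (∃ p a x y, (p, dom, a) ∈ S ∧ (x, p, y) ∈ S ∧ t = (x, typ, a)) ∨
      (∃ p a x y, (p, rng, a) ∈ S ∧ (x, p, y) ∈ S ∧ t = (y, typ, a)) := by
  simp only [rdfsStep, Set.mem_union, Set.mem_setOf_eq, or_assoc]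

/-- a nonempty sp-chain cannot end at a vocabulary element -/
lemma chain_to_vocab (hG : Genuine sp sc typ dom rng G) {p v : T}
    (hv : v ∈ ({sp, sc, typ, dom, rng} : Set T))
    (h : ReflTransGen (fun a b => (a, sp, b) ∈ G) p v) : p = v := by
  rcases h.cases_tail with h | ⟨c, _, hc⟩
  · exact h.symm
  · exact absurd hv (hG _ hc).2

lemma mem_C_sp (hG : Genuine sp sc typ dom rng G)
    (h1 : sc ≠ sp) (h2 : typ ≠ sp) {a b : T}
    (h : (a, sp, b) ∈ C sp sc typ dom rng G) :
    TransGen (fun a b => (a, sp, b) ∈ G) a b := by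
  rcases h with ⟨p, r, ht, heq⟩ | ⟨a', c, ht, heq⟩ |
      ⟨p, q, x, y, hch, hxy, heq⟩ | ⟨x, b', hty, heq⟩
  · simp only [Prod.mk.injEq] at heq; obtain ⟨rfl, -, rfl⟩ := heq; exact ht
  · simp only [Prod.mk.injEq] at heq; exact absurd heq.2.1.symm h1
  · simp only [Prod.mk.injEq] at heq; obtain ⟨rfl, hq, rfl⟩ := heq
    subst hq
    have := chain_to_vocab hG (by simp) hch
    subst this
    exact TransGen.single hxy
  · simp only [Prod.mk.injEq] at heq; exact absurd heq.2.1.symm h2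

lemma mem_C_sc (hG : Genuine sp sc typ dom rng G)
    (h1 : sp ≠ sc) (h2 : typ ≠ sc) {a b : T}
    (h : (a, sc, b) ∈ C sp sc typ dom rng G) :
    TransGen (fun a b => (a, sc, b) ∈ G) a b := by
  rcases h with ⟨p, r, ht, heq⟩ | ⟨a', c, ht, heq⟩ |
      ⟨p, q, x, y, hch, hxy, heq⟩ | ⟨x, b', hty, heq⟩
  · simp only [Prod.mk.injEq] at heq; exact absurd heq.2.1.symm h1
  · simp only [Prod.mk.injEq] at heq; obtain ⟨rfl, -, rfl⟩ := heq; exact ht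
  · simp only [Prod.mk.injEq] at heq; obtain ⟨rfl, hq, rfl⟩ := heq
    subst hq
    have := chain_to_vocab hG (by simp) hch
    subst this
    exact TransGen.single hxy
  · simp only [Prod.mk.injEq] at heq; exact absurd heq.2.1.symm h2

lemma mem_C_dom (hG : Genuine sp sc typ dom rng G)
    (h1 : sp ≠ dom) (h2 : sc ≠ dom) (h3 : typ ≠ dom) {a b : T}
    (h : (a, dom, b) ∈ C sp sc typ dom rng G) : (a, dom, b) ∈ G := by
  rcases h with ⟨p, r, ht, heq⟩ | ⟨a', c, ht, heq⟩ |
      ⟨p, q, x, y, hch, hxy, heq⟩ | ⟨x, b', hty, heq⟩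
  · simp only [Prod.mk.injEq] at heq; exact absurd heq.2.1.symm h1
  · simp only [Prod.mk.injEq] at heq; exact absurd heq.2.1.symm h2
  · simp only [Prod.mk.injEq] at heq; obtain ⟨rfl, hq, rfl⟩ := heq
    subst hq
    have := chain_to_vocab hG (by simp) hch
    subst this
    exact hxy
  · simp only [Prod.mk.injEq] at heq; exact absurd heq.2.1.symm h3

lemma mem_C_rng (hG : Genuine sp sc typ dom rng G)
    (h1 : sp ≠ rng) (h2 : sc ≠ rng) (h3 : typ ≠ rng) {a b : T}
    (h : (a, rng, b) ∈ C sp sc typ dom rng G) : (a, rng, b) ∈ G := by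
  rcases h with ⟨p, r, ht, heq⟩ | ⟨a', c, ht, heq⟩ |
      ⟨p, q, x, y, hch, hxy, heq⟩ | ⟨x, b', hty, heq⟩
  · simp only [Prod.mk.injEq] at heq; exact absurd heq.2.1.symm h1
  · simp only [Prod.mk.injEq] at heq; exact absurd heq.2.1.symm h2
  · simp only [Prod.mk.injEq] at heq; obtain ⟨rfl, hq, rfl⟩ := heq
    subst hq
    have := chain_to_vocab hG (by simp) hch
    subst this
    exact hxy
  · simp only [Prod.mk.injEq] at heq; exact absurd heq.2.1.symm h3

lemma mem_C_typ (hG : Genuine sp sc typ dom rng G)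
    (h1 : sp ≠ typ) (h2 : sc ≠ typ) {a b : T}
    (h : (a, typ, b) ∈ C sp sc typ dom rng G) : TY sp sc typ dom rng G a b := by
  rcases h with ⟨p, r, ht, heq⟩ | ⟨a', c, ht, heq⟩ |
      ⟨p, q, x, y, hch, hxy, heq⟩ | ⟨x, b', hty, heq⟩
  · simp only [Prod.mk.injEq] at heq; exact absurd heq.2.1.symm h1
  · simp only [Prod.mk.injEq] at heq; exact absurd heq.2.1.symm h2
  · simp only [Prod.mk.injEq] at heq; obtain ⟨rfl, hq, rfl⟩ := heq
    subst hq
    have := chain_to_vocab hG (by simp) hch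
    subst this
    exact Or.inl ⟨b, hxy, ReflTransGen.refl⟩
  · simp only [Prod.mk.injEq] at heq; obtain ⟨rfl, -, rfl⟩ := heq; exact hty

lemma mem_C_nonvocab {p : T} (hp : p ∉ ({sp, sc, typ, dom, rng} : Set T)) {x y : T}
    (h : (x, p, y) ∈ C sp sc typ dom rng G) :
    ∃ p0, ReflTransGen (fun a b => (a, sp, b) ∈ G) p0 p ∧ (x, p0, y) ∈ G := by
  rcases h with ⟨p', r, ht, heq⟩ | ⟨a', c, ht, heq⟩ |
      ⟨p', q, x', y', hch, hxy, heq⟩ | ⟨x', b', hty, heq⟩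
  · simp only [Prod.mk.injEq] at heq; exact absurd (by simp [heq.2.1]) hp
  · simp only [Prod.mk.injEq] at heq; exact absurd (by simp [heq.2.1]) hp
  · simp only [Prod.mk.injEq] at heq; obtain ⟨rfl, rfl, rfl⟩ := heq
    exact ⟨p', hch, hxy⟩
  · simp only [Prod.mk.injEq] at heq; exact absurd (by simp [heq.2.1]) hp

lemma G_subset_C : G ⊆ C sp sc typ dom rng G := by
  rintro ⟨x, p, y⟩ ht
  exact Or.inr (Or.inr (Or.inl ⟨p, p, x, y, ReflTransGen.refl, ht, rfl⟩))

/-- C is closed under one RDFS step. -/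
lemma C_closed (hG : Genuine sp sc typ dom rng G)
    (h12 : sp ≠ sc) (h13 : sp ≠ typ) (h14 : sp ≠ dom) (h15 : sp ≠ rng)
    (h23 : sc ≠ typ) (h24 : sc ≠ dom) (h25 : sc ≠ rng)
    (h34 : typ ≠ dom) (h35 : typ ≠ rng) :
    rdfsStep sp sc typ dom rng (C sp sc typ dom rng G) ⊆ C sp sc typ dom rng G := by
  intro t ht
  rw [mem_rdfsStep] at ht
  rcases ht with ht | ⟨p, q, r, h1, h2, rfl⟩ | ⟨a, b, c, h1, h2, rfl⟩ |
      ⟨p, q, x, y, h1, h2, rfl⟩ | ⟨a, b, x, h1, h2, rfl⟩ |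
      ⟨p, a, x, y, h1, h2, rfl⟩ | ⟨p, a, x, y, h1, h2, rfl⟩
  · exact ht
  · -- sp transitivity
    exact Or.inl ⟨p, r, (mem_C_sp hG h12.symm h13.symm h1).trans
      (mem_C_sp hG h12.symm h13.symm h2), rfl⟩
  · -- sc transitivity
    exact Or.inr (Or.inl ⟨a, c, (mem_C_sc hG h12 h23.symm h1).trans
      (mem_C_sc hG h12 h23.symm h2), rfl⟩)
  · -- inheritance
    have hpq := mem_C_sp hG h12.symm h13.symm h1
    obtain ⟨c, hpc, -⟩ := TransGen.head'_iff.1 hpq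
    have hpnv : p ∉ ({sp, sc, typ, dom, rng} : Set T) := (hG _ hpc).1
    obtain ⟨p0, hch, hxy⟩ := mem_C_nonvocab hpnv h2
    exact Or.inr (Or.inr (Or.inl ⟨p0, q, x, y,
      hch.trans hpq.to_reflTransGen, hxy, rfl⟩))
  · -- sc typing
    have hab := mem_C_sc hG h12 h23.symm h1
    have hty := mem_C_typ hG h13 h23 h2
    refine Or.inr (Or.inr (Or.inr ⟨x, b, ?_, rfl⟩))
    rcases hty with ⟨c0, hg, hc⟩ | ⟨p0, pn, y, c0, hsp, hg, hd, hc⟩ |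
        ⟨p0, pn, y, c0, hsp, hg, hr, hc⟩
    · exact Or.inl ⟨c0, hg, hc.trans hab.to_reflTransGen⟩
    · exact Or.inr (Or.inl ⟨p0, pn, y, c0, hsp, hg, hd,
        hc.trans hab.to_reflTransGen⟩)
    · exact Or.inr (Or.inr ⟨p0, pn, y, c0, hsp, hg, hr,
        hc.trans hab.to_reflTransGen⟩)
  · -- dom
    have hpd := mem_C_dom hG h14 h24 h34 h1
    have hpnv : p ∉ ({sp, sc, typ, dom, rng} : Set T) := (hG _ hpd).1
    obtain ⟨p0, hch, hxy⟩ := mem_C_nonvocab hpnv h2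
    exact Or.inr (Or.inr (Or.inr ⟨x, a,
      Or.inr (Or.inl ⟨p0, p, y, a, hch, hxy, hpd, ReflTransGen.refl⟩), rfl⟩))
  · -- rng
    have hpr := mem_C_rng hG h15 h25 h35 h1
    have hpnv : p ∉ ({sp, sc, typ, dom, rng} : Set T) := (hG _ hpr).1
    obtain ⟨p0, hch, hxy⟩ := mem_C_nonvocab hpnv h2
    exact Or.inr (Or.inr (Or.inr ⟨y, a,
      Or.inr (Or.inr ⟨p0, p, x, a, hch, hxy, hpr, ReflTransGen.refl⟩), rfl⟩))

lemma rdfsStep_mono {S S' : Set (T × T × T)} (h : S ⊆ S') :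
    rdfsStep sp sc typ dom rng S ⊆ rdfsStep sp sc typ dom rng S' := by
  intro t ht
  rw [mem_rdfsStep] at ht ⊢
  rcases ht with ht | ⟨p, q, r, h1, h2, rfl⟩ | ⟨a, b, c, h1, h2, rfl⟩ |
      ⟨p, q, x, y, h1, h2, rfl⟩ | ⟨a, b, x, h1, h2, rfl⟩ |
      ⟨p, a, x, y, h1, h2, rfl⟩ | ⟨p, a, x, y, h1, h2, rfl⟩
  · exact Or.inl (h ht)
  · exact Or.inr (Or.inl ⟨p, q, r, h h1, h h2, rfl⟩)
  · exact Or.inr (Or.inr (Or.inl ⟨a, b, c, h h1, h h2, rfl⟩))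
  · exact Or.inr (Or.inr (Or.inr (Or.inl ⟨p, q, x, y, h h1, h h2, rfl⟩)))
  · exact Or.inr (Or.inr (Or.inr (Or.inr (Or.inl ⟨a, b, x, h h1, h h2, rfl⟩))))
  · exact Or.inr (Or.inr (Or.inr (Or.inr (Or.inr (Or.inl ⟨p, a, x, y, h h1, h h2, rfl⟩)))))
  · exact Or.inr (Or.inr (Or.inr (Or.inr (Or.inr (Or.inr ⟨p, a, x, y, h h1, h h2, rfl⟩)))))

lemma subset_rdfsStep {S : Set (T × T × T)} : S ⊆ rdfsStep sp sc typ dom rng S :=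
  fun t ht => mem_rdfsStep.2 (Or.inl ht)

lemma iterate_mono_n {m n : ℕ} (h : m ≤ n) :
    (rdfsStep sp sc typ dom rng)^[m] G ⊆ (rdfsStep sp sc typ dom rng)^[n] G := by
  induction n with
  | zero => simp_all
  | succ n ih =>
    rcases Nat.lt_or_ge m (n + 1) with hm | hm
    · rw [Function.iterate_succ_apply']
      exact (ih (Nat.lt_succ_iff.1 hm)).trans subset_rdfsStep
    · have : m = n + 1 := le_antisymm h hm
      subst this; rfl

end RDFSAux

/-- Characterization of the type triples in the RDFS closure of a genuine graph G:
(σ(X), type, σ(Y)) holds in the closure iff (1) some (σ(X), type, c₀) ∈ G with an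
sc-chain in G from c₀ to σ(Y), or (2) there are an sp-chain p₀ … pₙ in G, a triple
(σ(X), p₀, y) ∈ G and (pₙ, dom, c₀) ∈ G with an sc-chain from c₀ to σ(Y), or
(3) symmetrically with (y, p₀, σ(X)) and range instead of dom. -/
theorem type_closure_characterization {T V : Type} (sp sc typ dom rng : T)
    (hdist : List.Pairwise (· ≠ ·) [sp, sc, typ, dom, rng])
    (G : Set (T × T × T))
    (hGenuine : ∀ t ∈ G, t.1 ∉ ({sp, sc, typ, dom, rng} : Set T) ∧
      t.2.2 ∉ ({sp, sc, typ, dom, rng} : Set T))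
    (σ : V → T) (X Y : V) :
    (σ X, typ, σ Y) ∈ (⋃ n, (rdfsStep sp sc typ dom rng)^[n] G) ↔
      ((∃ c0, (σ X, typ, c0) ∈ G ∧
          Relation.ReflTransGen (fun a b => (a, sc, b) ∈ G) c0 (σ Y)) ∨
        (∃ p0 pn y c0, Relation.ReflTransGen (fun a b => (a, sp, b) ∈ G) p0 pn ∧
          (σ X, p0, y) ∈ G ∧ (pn, dom, c0) ∈ G ∧
          Relation.ReflTransGen (fun a b => (a, sc, b) ∈ G) c0 (σ Y)) ∨
        (∃ p0 pn y c0, Relation.ReflTransGen (fun a b => (a, sp, b) ∈ G) p0 pn ∧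
          (y, p0, σ X) ∈ G ∧ (pn, rng, c0) ∈ G ∧
          Relation.ReflTransGen (fun a b => (a, sc, b) ∈ G) c0 (σ Y))) := by
  open RDFSAux Relation in
  simp [List.pairwise_cons] at hdist
  obtain ⟨⟨h12, h13, h14, h15⟩, ⟨h23, h24, h25⟩, ⟨h34, h35⟩, h45⟩ := hdist
  have hG : Genuine sp sc typ dom rng G := hGenuine
  set U := ⋃ n, (rdfsStep sp sc typ dom rng)^[n] G with hU
  -- U is closed under the rules
  have hGU : G ⊆ U := Set.subset_iUnion_of_subset 0 (by simp)
  have hpair : ∀ {s t : T × T × T}, s ∈ U → t ∈ U →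
      ∃ n, s ∈ (rdfsStep sp sc typ dom rng)^[n] G ∧
           t ∈ (rdfsStep sp sc typ dom rng)^[n] G := by
    intro s t hs ht
    obtain ⟨m, hm⟩ := Set.mem_iUnion.1 hs
    obtain ⟨n, hn⟩ := Set.mem_iUnion.1 ht
    exact ⟨max m n, iterate_mono_n (le_max_left m n) hm,
      iterate_mono_n (le_max_right m n) hn⟩
  have hstep : ∀ {n : ℕ} {t : T × T × T},
      t ∈ rdfsStep sp sc typ dom rng ((rdfsStep sp sc typ dom rng)^[n] G) → t ∈ U := by
    intro n t ht
    exact Set.mem_iUnion.2 ⟨n + 1, by rwa [Function.iterate_succ_apply']⟩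
  have hrule3 : ∀ {p q x y : T}, (p, sp, q) ∈ U → (x, p, y) ∈ U → (x, q, y) ∈ U := by
    intro p q x y hs ht
    obtain ⟨n, hn1, hn2⟩ := hpair hs ht
    exact hstep (mem_rdfsStep.2 (Or.inr (Or.inr (Or.inr (Or.inl
      ⟨p, q, x, y, hn1, hn2, rfl⟩)))))
  have hrule4 : ∀ {a b x : T}, (a, sc, b) ∈ U → (x, typ, a) ∈ U → (x, typ, b) ∈ U := by
    intro a b x hs ht
    obtain ⟨n, hn1, hn2⟩ := hpair hs ht
    exact hstep (mem_rdfsStep.2 (Or.inr (Or.inr (Or.inr (Or.inr (Or.inl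
      ⟨a, b, x, hn1, hn2, rfl⟩))))))
  have hrule5 : ∀ {p a x y : T}, (p, dom, a) ∈ U → (x, p, y) ∈ U → (x, typ, a) ∈ U := by
    intro p a x y hs ht
    obtain ⟨n, hn1, hn2⟩ := hpair hs ht
    exact hstep (mem_rdfsStep.2 (Or.inr (Or.inr (Or.inr (Or.inr (Or.inr (Or.inl
      ⟨p, a, x, y, hn1, hn2, rfl⟩)))))))
  have hrule6 : ∀ {p a x y : T}, (p, rng, a) ∈ U → (x, p, y) ∈ U → (y, typ, a) ∈ U := by
    intro p a x y hs ht
    obtain ⟨n, hn1, hn2⟩ := hpair hs ht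
    exact hstep (mem_rdfsStep.2 (Or.inr (Or.inr (Or.inr (Or.inr (Or.inr (Or.inr
      ⟨p, a, x, y, hn1, hn2, rfl⟩)))))))
  have hscchain : ∀ {x a b : T}, (x, typ, a) ∈ U →
      ReflTransGen (fun a b => (a, sc, b) ∈ G) a b → (x, typ, b) ∈ U := by
    intro x a b ha h
    induction h with
    | refl => exact ha
    | tail _ e ih => exact hrule4 (hGU e) ih
  have hspchain : ∀ {x p0 pn y : T},
      ReflTransGen (fun a b => (a, sp, b) ∈ G) p0 pn →
      (x, p0, y) ∈ U → (x, pn, y) ∈ U := by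
    intro x p0 pn y h ha
    induction h with
    | refl => exact ha
    | tail _ e ih => exact hrule3 (hGU e) ih
  constructor
  · -- forward: closure ⊆ C and extract
    intro h
    obtain ⟨n, hn⟩ := Set.mem_iUnion.1 h
    have hsub : ∀ m : ℕ, (rdfsStep sp sc typ dom rng)^[m] G ⊆ C sp sc typ dom rng G := by
      intro m
      induction m with
      | zero => exact G_subset_C
      | succ m ih =>
        rw [Function.iterate_succ_apply']
        exact (rdfsStep_mono ih).trans
          (C_closed hG h12 h13 h14 h15 h23 h24 h25 h34 h35)
    exact mem_C_typ hG h13 h23 (hsub n hn)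
  · -- backward
    rintro (⟨c0, hg, hc⟩ | ⟨p0, pn, y, c0, hsp, hg, hd, hc⟩ |
        ⟨p0, pn, y, c0, hsp, hg, hr, hc⟩)
    · exact hscchain (hGU hg) hc
    · exact hscchain (hrule5 (hGU hd) (hspchain hsp (hGU hg))) hc
    · exact hscchain (hrule6 (hGU hr) (hspchain hsp (hGU hg))) hc
end

section
/- The set of answers to a compound graph pattern (Definition of S(P,G) via operations on map sets) coincides with the set of maps σ restricted to the variables of P such that G entails σ(P) under the inductive entailment-modulo-σ definition; in particular for P = P1 AND P2, S(P1,G) ⋈ S(P2,G) = {σ|_{B(P)} : G ⊨ σ(P1) and G ⊨ σ(P2)} whenever S(Pi,G) = {σ|_{B(Pi)} : G ⊨ σ(Pi)} for i = 1, 2 and the basic entailment is monotone under extension of maps. -/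
/-- Two maps are compatible when they agree on the intersection of their domains. -/
def Compatible {T V : Type} (σ1 σ2 : V → Option T) : Prop :=
  ∀ x a b, σ1 x = some a → σ2 x = some b → a = b

/-- The join σ1 ⊕ σ2 of two maps. -/
def joinMap {T V : Type} (σ1 σ2 : V → Option T) : V → Option T :=
  fun x => (σ1 x).orElse (fun _ => σ2 x)

/-- The compatible-join of two sets of maps. -/
def SetJoin {T V : Type} (Ω1 Ω2 : Set (V → Option T)) : Set (V → Option T) :=
  {σ | ∃ σ1 ∈ Ω1, ∃ σ2 ∈ Ω2, Compatible σ1 σ2 ∧ σ = joinMap σ1 σ2}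

open Classical in
/-- The restriction of σ to B, null (none) outside B. -/
noncomputable def restrictC {T V : Type} (σ : V → Option T) (B : Set V) :
    V → Option T :=
  fun v => if v ∈ B then σ v else none

section Restriction

variable {T V : Type} {σ τ : V → Option T} {B B' : Set V} {v : V}

@[simp]
theorem restrictC_apply_of_mem (hv : v ∈ B) : restrictC σ B v = σ v := by
  simp [restrictC, hv]

@[simp]
theorem restrictC_apply_of_notMem (hv : v ∉ B) : restrictC σ B v = none := by
  simp [restrictC, hv]

theorem restrictC_eq_self (h : ∀ v ∉ B, σ v = none) : restrictC σ B = σ := by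
  funext v
  by_cases hv : v ∈ B
  · exact restrictC_apply_of_mem hv
  · rw [restrictC_apply_of_notMem hv, h v hv]

theorem eqOn_of_restrictC_eq (h : restrictC σ B = restrictC τ B) : ∀ v ∈ B, σ v = τ v :=
  fun v hv => by simpa [hv] using congrFun h v

variable (σ B B')

theorem compatible_restrictC : Compatible (restrictC σ B) (restrictC σ B') := by
  intro v a b ha hb
  by_cases hv : v ∈ B
  · by_cases hv' : v ∈ B' <;> simp_all
  · simp [hv] at ha

theorem joinMap_restrictC : joinMap (restrictC σ B) (restrictC σ B') = restrictC σ (B ∪ B') := by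
  funext v
  by_cases hv : v ∈ B
  · cases hσ : σ v <;> by_cases hv' : v ∈ B' <;> simp [joinMap, hv, hv', hσ]
  · by_cases hv' : v ∈ B' <;> simp [joinMap, hv, hv']

theorem restrictC_joinMap_restrictC :
    restrictC (joinMap (restrictC σ B) (restrictC τ B')) (B ∪ B') =
      joinMap (restrictC σ B) (restrictC τ B') := by
  refine restrictC_eq_self fun v hv => ?_
  rw [Set.mem_union, not_or] at hv
  simp [joinMap, hv.1, hv.2]

end Restriction

/-- The compositional semantics of AND agrees with entailment modulo a map:
if S(Pi,G) = {σ|_{B(Pi)} : G ⊨ σ(Pi)} (formalized through the entailment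
predicates E1, E2 depending only on the values of σ on B1, resp. B2), and joins
of compatible answers restrict back to the answers they come from, then
S(P1,G) ⋈ S(P2,G) = {σ|_{B(P1)∪B(P2)} : G ⊨ σ(P1) and G ⊨ σ(P2)}. -/
theorem and_answers_join {T V : Type} (B1 B2 : Set V)
    (E1 E2 : (V → Option T) → Prop)
    (hE1 : ∀ σ σ', (∀ v ∈ B1, σ v = σ' v) → (E1 σ ↔ E1 σ'))
    (hE2 : ∀ σ σ', (∀ v ∈ B2, σ v = σ' v) → (E2 σ ↔ E2 σ'))
    (hrec : ∀ σ1 σ2, (∃ σ, E1 σ ∧ σ1 = restrictC σ B1) →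
      (∃ σ, E2 σ ∧ σ2 = restrictC σ B2) → Compatible σ1 σ2 →
      restrictC (joinMap σ1 σ2) B1 = σ1 ∧ restrictC (joinMap σ1 σ2) B2 = σ2) :
    SetJoin {m | ∃ σ, E1 σ ∧ m = restrictC σ B1}
        {m | ∃ σ, E2 σ ∧ m = restrictC σ B2} =
      {m | ∃ σ, E1 σ ∧ E2 σ ∧ m = restrictC σ (B1 ∪ B2)} := by
  ext m
  constructor
  · rintro ⟨_, ⟨τ1, hτ1, rfl⟩, _, ⟨τ2, hτ2, rfl⟩, hc, rfl⟩
    -- without `hrec`, a `none` of `τ1` on `B1` could be filled in by the join from `τ2`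
    obtain ⟨r1, r2⟩ := hrec _ _ ⟨τ1, hτ1, rfl⟩ ⟨τ2, hτ2, rfl⟩ hc
    exact ⟨_, (hE1 _ _ (eqOn_of_restrictC_eq r1)).2 hτ1,
      (hE2 _ _ (eqOn_of_restrictC_eq r2)).2 hτ2,
      (restrictC_joinMap_restrictC τ1 B1 B2).symm⟩
  · rintro ⟨σ, h1, h2, rfl⟩
    exact ⟨_, ⟨σ, h1, rfl⟩, _, ⟨σ, h2, rfl⟩, compatible_restrictC σ B1 B2,
      (joinMap_restrictC σ B1 B2).symm⟩
end
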